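/- Linear programming bound for energy (Yudin): let f : (0,4] → ℝ be a potential and suppose h : [−1,1] → ℝ satisfies (i) h(t) ≤ f(2−2t)/2 for all t ∈ [−1,1), and (ii) h(t) = Σ_{k=0}^{d} α_k P_k(t) where α_k ≥ 0 for k ≥ 1 and the kernels (x,y) ↦ P_k(⟨x,y⟩) are positive-definite on S^{n−1} with P₀ ≡ 1. Then for every finite C ⊆ S^{n−1}, E_f(C) ≥ α₀|C|² − h(1)|C|. -/

import Mathlib

open RealInnerProductSpace Classical

/-! Expanding `h` in the kernels `P_k`, the double sum `∑_{x,y ∈ C} h ⟪x, y⟫` is at least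
`α₀ |C|²`, since the `P₀`-part contributes exactly `α₀ |C|²` and every other part is a
nonnegative multiple of a positive-definite sum. Removing the diagonal costs `h 1 · |C|`, and
off the diagonal `⟪x, y⟫ < 1` and `|x - y|² = 2 - 2⟪x, y⟫`, so each remaining term is bounded
by half the potential. -/

lemma dist_sq_eq_two_sub_two_inner_of_norm_eq_one {E : Type*} [NormedAddCommGroup E]
    [InnerProductSpace ℝ E] {x y : E} (hx : ‖x‖ = 1) (hy : ‖y‖ = 1) :
    dist x y ^ 2 = 2 - 2 * ⟪x, y⟫ := by
  rw [dist_eq_norm, norm_sub_sq_real, hx, hy]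
  ring

lemma Finset.sum_filter_ne_eq_sum_sum_sub_sum {α β : Type*} [DecidableEq α] [AddCommGroup β]
    (s : Finset α) (g : α → α → β) :
    ∑ p ∈ (s ×ˢ s).filter (fun p => p.1 ≠ p.2), g p.1 p.2 =
      ∑ x ∈ s, ∑ y ∈ s, g x y - ∑ x ∈ s, g x x := by
  rw [eq_sub_iff_add_eq, ← Finset.sum_product (f := fun p => g p.1 p.2),
    ← Finset.sum_filter_add_sum_filter_not (s ×ˢ s) (fun p => p.1 = p.2),
    ← Finset.diag_eq_filter, Finset.sum_diag, add_comm]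

lemma mul_card_sq_le_sum_sum_sum_of_nonneg {X ι : Type*} [Fintype ι] (i₀ : ι) (α : ι → ℝ)
    (K : ι → X → X → ℝ) (C : Finset X) (hK₀ : ∀ x y, K i₀ x y = 1)
    (hα : ∀ i, i ≠ i₀ → 0 ≤ α i) (hK : ∀ i, i ≠ i₀ → 0 ≤ ∑ x ∈ C, ∑ y ∈ C, K i x y) :
    α i₀ * (C.card : ℝ) ^ 2 ≤ ∑ x ∈ C, ∑ y ∈ C, ∑ i, α i * K i x y := by
  have hswap : ∑ x ∈ C, ∑ y ∈ C, ∑ i, α i * K i x y = ∑ i, α i * ∑ x ∈ C, ∑ y ∈ C, K i x y := by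
    simp only [Finset.mul_sum]
    exact (Finset.sum_congr rfl fun _ _ => Finset.sum_comm).trans Finset.sum_comm
  have hmain : α i₀ * ∑ x ∈ C, ∑ y ∈ C, K i₀ x y = α i₀ * (C.card : ℝ) ^ 2 := by
    simp only [hK₀, Finset.sum_const, nsmul_eq_mul, mul_one, sq]
  have hrest : 0 ≤ ∑ i ∈ Finset.univ.erase i₀, α i * ∑ x ∈ C, ∑ y ∈ C, K i x y :=
    Finset.sum_nonneg fun i hi =>
      mul_nonneg (hα i (Finset.ne_of_mem_erase hi)) (hK i (Finset.ne_of_mem_erase hi))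
  rw [hswap, ← Finset.add_sum_erase _ _ (Finset.mem_univ i₀), hmain]
  linarith

/-- Yudin's linear programming bound for potential energy on the sphere:
if `h(t) = Σ_k α_k P_k(t)` with `α_k ≥ 0` for `k ≥ 1`, `P₀ ≡ 1`, each `P_k`
(`k ≥ 1`) positive definite on the sphere, and `h(t) ≤ f(2−2t)/2` for
`t ∈ [−1,1)`, then every finite set `C` of unit vectors satisfies
`E_f(C) ≥ α₀|C|² − h(1)|C|`. -/
theorem stmt_14 {n : ℕ} (f : ℝ → ℝ) (h : ℝ → ℝ) (d : ℕ)
    (P : Fin (d + 1) → (ℝ → ℝ)) (α : Fin (d + 1) → ℝ)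
    (hP0 : ∀ t, P 0 t = 1)
    (hα : ∀ k, k ≠ 0 → 0 ≤ α k)
    (hPk : ∀ k : Fin (d + 1), k ≠ 0 →
      ∀ D : Finset (EuclideanSpace ℝ (Fin n)), (∀ x ∈ D, ‖x‖ = 1) →
        0 ≤ ∑ x ∈ D, ∑ y ∈ D, P k ⟪x, y⟫)
    (hh : ∀ t ∈ Set.Icc (-1 : ℝ) 1, h t = ∑ k, α k * P k t)
    (hhf : ∀ t ∈ Set.Ico (-1 : ℝ) 1, h t ≤ f (2 - 2 * t) / 2)
    (C : Finset (EuclideanSpace ℝ (Fin n))) (hC : ∀ x ∈ C, ‖x‖ = 1) :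
    α 0 * (C.card : ℝ) ^ 2 - h 1 * (C.card : ℝ) ≤
      (1 / 2) * ∑ p ∈ (C ×ˢ C).filter (fun p => p.1 ≠ p.2), f (dist p.1 p.2 ^ 2) := by
  have hinner : ∀ x ∈ C, ∀ y ∈ C, ⟪x, y⟫ ∈ Set.Icc (-1 : ℝ) 1 := fun x hx y hy =>
    real_inner_mem_Icc_of_norm_eq_one (hC x hx) (hC y hy)
  have hfull : α 0 * (C.card : ℝ) ^ 2 ≤ ∑ x ∈ C, ∑ y ∈ C, h ⟪x, y⟫ :=
    calc α 0 * (C.card : ℝ) ^ 2 ≤ ∑ x ∈ C, ∑ y ∈ C, ∑ k, α k * P k ⟪x, y⟫ :=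
          mul_card_sq_le_sum_sum_sum_of_nonneg 0 α (fun k x y => P k ⟪x, y⟫) C
            (fun _ _ => hP0 _) hα (fun k hk => hPk k hk C hC)
      _ = ∑ x ∈ C, ∑ y ∈ C, h ⟪x, y⟫ := Finset.sum_congr rfl fun x hx =>
          Finset.sum_congr rfl fun y hy => (hh _ (hinner x hx y hy)).symm
  have hdiag : ∑ x ∈ C, h ⟪x, x⟫ = h 1 * (C.card : ℝ) := by
    rw [Finset.sum_congr rfl fun x hx => by rw [real_inner_self_eq_norm_sq, hC x hx, one_pow],
      Finset.sum_const, nsmul_eq_mul, mul_comm]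
  have hoff : ∑ p ∈ (C ×ˢ C).filter (fun p => p.1 ≠ p.2), h ⟪p.1, p.2⟫ ≤
      (1 / 2) * ∑ p ∈ (C ×ˢ C).filter (fun p => p.1 ≠ p.2), f (dist p.1 p.2 ^ 2) := by
    rw [Finset.mul_sum]
    refine Finset.sum_le_sum fun p hp => ?_
    obtain ⟨⟨hx, hy⟩, hne⟩ := by simpa only [Finset.mem_filter, Finset.mem_product] using hp
    have hlt := (inner_lt_one_iff_real_of_norm_eq_one (hC _ hx) (hC _ hy)).2 hne
    have := hhf _ ⟨(hinner _ hx _ hy).1, hlt⟩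
    rw [dist_sq_eq_two_sub_two_inner_of_norm_eq_one (hC _ hx) (hC _ hy)]
    linarith
  rw [Finset.sum_filter_ne_eq_sum_sum_sub_sum C (fun x y => h ⟪x, y⟫), hdiag] at hoff
  linarith
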